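/- arXiv:1510.08341 — 6 statements merged into one kernel-verified Lean document; each statement's English description precedes it below -/
import Mathlib

section
/- For the generalized Gaussian density p(x) = (1/Z(θ,β)) e^{-β|x-m|^θ} with β, θ > 0, the entropy power and variance satisfy the exact relation e^{2h(p)} = A(θ) · Var(X), where A(θ) = 4 θ^{-2} (Γ(1/θ))^3 / Γ(3/θ) · e^{2/θ}. -/
/-!
Writing `Z` for the normalizing constant, `log p = -log Z - β |x - m|^θ`, so both the entropy and
the variance reduce to the absolute moments `∫ |x - m|^s p = β^(-s/θ) Γ((s+1)/θ) / Γ(1/θ)`, which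
come from the Gamma integral after folding the line onto `(0, ∞)`. The moments `s = 0` and `s = θ`
give `h(p) = log Z + 1/θ`, the moment `s = 2` gives the variance, and `e^{2h} = Z² e^{2/θ}` is then
`A(θ)` times the variance.
-/

open Real MeasureTheory Set

noncomputable def A (θ : ℝ) : ℝ :=
  4 / θ ^ 2 * (Real.Gamma (1 / θ)) ^ 3 / Real.Gamma (3 / θ) * Real.exp (2 / θ)

theorem integral_comp_abs_sub (m : ℝ) (f : ℝ → ℝ) :
    ∫ x, f |x - m| = 2 * ∫ x in Ioi (0 : ℝ), f x := by
  rw [← integral_comp_abs]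
  exact integral_sub_right_eq_self (fun x => f |x|) m

noncomputable def genGaussianNormalizer (β θ : ℝ) : ℝ :=
  2 * β ^ (-(1 / θ)) * θ⁻¹ * Gamma (1 / θ)

noncomputable def genGaussianPDF (m β θ x : ℝ) : ℝ :=
  (genGaussianNormalizer β θ)⁻¹ * exp (-β * |x - m| ^ θ)

section GenGaussian

variable {β θ : ℝ}

theorem genGaussianNormalizer_pos (hβ : 0 < β) (hθ : 0 < θ) : 0 < genGaussianNormalizer β θ := by
  have := Gamma_pos_of_pos (one_div_pos.mpr hθ)
  unfold genGaussianNormalizer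
  positivity

theorem integral_abs_sub_rpow_mul_genGaussianPDF (m : ℝ) (hβ : 0 < β) (hθ : 0 < θ) {s : ℝ}
    (hs : -1 < s) :
    ∫ x, |x - m| ^ s * genGaussianPDF m β θ x =
      β ^ (-s / θ) * Gamma ((s + 1) / θ) / Gamma (1 / θ) := by
  have hβpow : β ^ (-(s + 1) / θ) = β ^ (-s / θ) * β ^ (-(1 / θ)) := by
    rw [← rpow_add hβ]; ring_nf
  simp only [genGaussianPDF, mul_left_comm _ (genGaussianNormalizer β θ)⁻¹]
  rw [integral_comp_abs_sub m (fun t => (genGaussianNormalizer β θ)⁻¹ * (t ^ s * exp (-β * t ^ θ))),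
    integral_const_mul, integral_rpow_mul_exp_neg_mul_rpow hθ hs hβ, hβpow, genGaussianNormalizer]
  field_simp [(rpow_pos_of_pos hβ (-(1 / θ))).ne']

theorem integrable_abs_sub_rpow_mul_genGaussianPDF (m : ℝ) (hβ : 0 < β) (hθ : 0 < θ) {s : ℝ}
    (hs : -1 < s) : Integrable fun x => |x - m| ^ s * genGaussianPDF m β θ x := by
  refine .of_integral_ne_zero ?_
  have := Gamma_pos_of_pos (one_div_pos.mpr hθ)
  have := Gamma_pos_of_pos (div_pos (neg_lt_iff_pos_add.mp hs) hθ)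
  rw [integral_abs_sub_rpow_mul_genGaussianPDF m hβ hθ hs]
  positivity

theorem integral_sq_sub_mul_genGaussianPDF (m : ℝ) (hβ : 0 < β) (hθ : 0 < θ) :
    ∫ x, (x - m) ^ 2 * genGaussianPDF m β θ x =
      β ^ (-2 / θ) * Gamma (3 / θ) / Gamma (1 / θ) := by
  convert integral_abs_sub_rpow_mul_genGaussianPDF m hβ hθ (s := 2) (by norm_num) using 3 with x
  · rw [rpow_two, sq_abs]
  · norm_num

theorem integral_genGaussianPDF_mul_log (m : ℝ) (hβ : 0 < β) (hθ : 0 < θ) :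
    ∫ x, genGaussianPDF m β θ x * log (genGaussianPDF m β θ x) =
      -(log (genGaussianNormalizer β θ) + 1 / θ) := by
  have hlog (x : ℝ) : genGaussianPDF m β θ x * log (genGaussianPDF m β θ x) =
      -log (genGaussianNormalizer β θ) * (|x - m| ^ (0 : ℝ) * genGaussianPDF m β θ x)
        - β * (|x - m| ^ θ * genGaussianPDF m β θ x) := by
    rw [genGaussianPDF, log_mul (inv_ne_zero (genGaussianNormalizer_pos hβ hθ).ne') (exp_ne_zero _),
      log_inv, log_exp, rpow_zero]
    ring
  have hΓ_succ : Gamma ((θ + 1) / θ) = Gamma (1 / θ) / θ := by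
    rw [add_div, div_self hθ.ne', add_comm, Gamma_add_one (one_div_pos.mpr hθ).ne']
    ring
  simp_rw [hlog]
  rw [integral_sub ((integrable_abs_sub_rpow_mul_genGaussianPDF m hβ hθ neg_one_lt_zero).const_mul _)
      ((integrable_abs_sub_rpow_mul_genGaussianPDF m hβ hθ (by linarith)).const_mul _),
    integral_const_mul, integral_const_mul,
    integral_abs_sub_rpow_mul_genGaussianPDF m hβ hθ neg_one_lt_zero,
    integral_abs_sub_rpow_mul_genGaussianPDF m hβ hθ (by linarith), hΓ_succ,
    show -θ / θ = -1 by field_simp, rpow_neg_one]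
  simp only [neg_zero, zero_div, rpow_zero, zero_add]
  field_simp
  ring

end GenGaussian

/-- For the generalized Gaussian density, `e^{2h(p)} = A(θ) · Var(X)`. -/
theorem generalized_gaussian_entropy_power_variance (m β θ : ℝ) (hβ : 0 < β) (hθ : 0 < θ)
    (p : ℝ → ℝ)
    (hp : ∀ x, p x =
      (2 * β ^ (-(1 / θ)) * θ⁻¹ * Real.Gamma (1 / θ))⁻¹ * Real.exp (-β * |x - m| ^ θ)) :
    Real.exp (2 * (-∫ x : ℝ, p x * Real.log (p x))) =
      A θ * ∫ x : ℝ, (x - m) ^ 2 * p x := by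
  obtain rfl : p = genGaussianPDF m β θ := funext hp
  rw [integral_genGaussianPDF_mul_log m hβ hθ, integral_sq_sub_mul_genGaussianPDF m hβ hθ, neg_neg,
    mul_add, exp_add, ← log_rpow (genGaussianNormalizer_pos hβ hθ),
    exp_log (rpow_pos_of_pos (genGaussianNormalizer_pos hβ hθ) 2)]
  have hβ_sq : (β ^ (-(1 / θ))) ^ (2 : ℝ) = β ^ (-2 / θ) := by
    rw [← rpow_mul hβ.le]; ring_nf
  have hΓ1 := (Gamma_pos_of_pos (one_div_pos.mpr hθ)).ne'
  rw [genGaussianNormalizer, mul_rpow (by positivity) (by positivity),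
    mul_rpow (by positivity) (by positivity), mul_rpow (by positivity) (rpow_nonneg hβ.le _), hβ_sq, A]
  norm_num [rpow_two]
  field_simp
end

section
/- The function A(θ) = 4 θ^{-2} (Γ(1/θ))^3 / Γ(3/θ) · e^{2/θ} attains its maximum on (0,∞) at θ = 2, with A(2) = 2πe. -/
/-!
With `t = 1/θ`, `A (1/t) = 4 t² Γ(t)³ / Γ(3t) · e^{2t}`. Writing `3 log Γ(t) - log Γ(3t)` through
Gauss's product formula with `3N` factors and grouping the factors of `Γ(3t)` in threes,
`log A(1/t) - log A(2)` becomes the limit of `φ_N(t) - φ_N(1/2)`, where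
`φ_N(t) = 2t + ∑_{m<N} [log(t+m+1/3) + log(t+m+2/3) - 2 log(t+m+1)] - 3 ∑_{N<k≤3N} log(t+k)`.
Each bracket is strictly concave, hence below its tangent at `t = 1/2`; each `log(t+k)` of the
tail is within `O(1/N²)` of its tangent at `1/2`; and the slopes at `1/2` of all the terms of
`φ_N` add up to `(N + 1/2)⁻¹`.
In the limit, `log A(1/t) - log A(2)` is at most minus the tangent gap of the first bracket,
which is negative for `t ≠ 1/2`.
-/

open Real Filter Finset Topology
open scoped Nat

lemma StrictConcaveOn.lt_tangent_of_hasDerivAt {S : Set ℝ} {f : ℝ → ℝ} {x y f' : ℝ}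
    (hf : StrictConcaveOn ℝ S f) (hx : x ∈ S) (hy : y ∈ S) (hxy : y ≠ x)
    (hf' : HasDerivAt f f' x) : f y < f x + f' * (y - x) := by
  rcases hxy.lt_or_gt with hlt | hgt
  · have := hf.lt_slope_of_hasDerivAt hy hx hlt hf'
    rw [slope_def_field, lt_div_iff₀ (by linarith)] at this
    linarith
  · have := hf.slope_lt_of_hasDerivAt hx hy hgt hf'
    rw [slope_def_field, div_lt_iff₀ (by linarith)] at this
    linarith

lemma sub_div_le_log_sub_log {x y : ℝ} (hx : 0 < x) (hy : 0 < y) :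
    (x - y) / x ≤ log x - log y := by
  have := one_sub_inv_le_log_of_pos (div_pos hx hy)
  rwa [log_div hx.ne' hy.ne', inv_div, one_sub_div hx.ne'] at this

noncomputable def logBlock (a b c u : ℝ) : ℝ := log (u + a) + log (u + b) - 2 * log (u + c)

noncomputable def logBlockDeriv (a b c u : ℝ) : ℝ := (u + a)⁻¹ + (u + b)⁻¹ - 2 * (u + c)⁻¹

section logBlock

variable {a b c u : ℝ}

lemma hasDerivAt_logBlock (ha : 0 < u + a) (hb : 0 < u + b) (hc : 0 < u + c) :
    HasDerivAt (logBlock a b c) (logBlockDeriv a b c u) u := by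
  have hlog : ∀ {e : ℝ}, 0 < u + e → HasDerivAt (fun v ↦ log (v + e)) (u + e)⁻¹ u := fun he ↦ by
    simpa using ((hasDerivAt_id u).add_const _).log he.ne'
  exact ((hlog ha).add (hlog hb)).sub ((hlog hc).const_mul 2)

lemma strictAntiOn_logBlockDeriv (hac : a < c) (hbc : b < c) :
    StrictAntiOn (logBlockDeriv a b c) (Set.Ioi (max (-a) (-b))) := by
  intro u hu v hv huv
  simp only [Set.mem_Ioi, max_lt_iff] at hu hv
  have hdecr : ∀ e, 0 < u + e → e < c → (u + c)⁻¹ - (v + c)⁻¹ < (u + e)⁻¹ - (v + e)⁻¹ := by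
    intro e he hec
    rw [inv_sub_inv (by linarith) (by linarith), inv_sub_inv (by linarith) (by linarith)]
    have hden : (u + e) * (v + e) < (u + c) * (v + c) := by nlinarith
    have hv' : 0 < v + e := by linarith
    rw [add_sub_add_right_eq_sub, add_sub_add_right_eq_sub]
    exact div_lt_div_of_pos_left (by linarith) (by positivity) hden
  have := hdecr a (by linarith) hac
  have := hdecr b (by linarith) hbc
  unfold logBlockDeriv
  linarith

lemma strictConcaveOn_logBlock (hac : a < c) (hbc : b < c) :
    StrictConcaveOn ℝ (Set.Ioi (max (-a) (-b))) (logBlock a b c) := by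
  have hderiv : ∀ u ∈ Set.Ioi (max (-a) (-b)),
      HasDerivAt (logBlock a b c) (logBlockDeriv a b c u) u := by
    intro u hu
    simp only [Set.mem_Ioi, max_lt_iff] at hu
    exact hasDerivAt_logBlock (by linarith) (by linarith) (by linarith)
  refine StrictAntiOn.strictConcaveOn_of_deriv (convex_Ioi _)
    (fun u hu ↦ (hderiv u hu).continuousAt.continuousWithinAt) ?_
  rw [interior_Ioi]
  exact (strictAntiOn_logBlockDeriv hac hbc).congr fun u hu ↦ (hderiv u hu).deriv.symm

end logBlock

noncomputable def cubeRatioSum (t : ℝ) (n : ℕ) : ℝ :=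
  ∑ j ∈ range n, (log (3 * t + (j + 1)) - 3 * log (t + (j + 1)))

lemma three_mul_logGammaSeq_sub_logGammaSeq {t : ℝ} (ht : 0 < t) (n : ℕ) :
    3 * BohrMollerup.logGammaSeq t n - BohrMollerup.logGammaSeq (3 * t) n =
      cubeRatioSum t n + 2 * log n ! + log 3 - 2 * log t := by
  simp only [BohrMollerup.logGammaSeq, cubeRatioSum, sum_range_succ', sum_sub_distrib, ← mul_sum]
  push_cast
  rw [add_zero, add_zero, log_mul three_ne_zero ht.ne']
  ring

lemma A_one_div {t : ℝ} : A (1 / t) = 4 * t ^ 2 * Gamma t ^ 3 / Gamma (3 * t) * exp (2 * t) := by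
  unfold A
  field_simp

lemma A_pos {θ : ℝ} (hθ : 0 < θ) : 0 < A θ := by
  unfold A
  have := Gamma_pos_of_pos (one_div_pos.2 hθ)
  have := Gamma_pos_of_pos (div_pos three_pos hθ)
  positivity

lemma log_A_one_div {t : ℝ} (ht : 0 < t) :
    log (A (1 / t)) = log 4 + 2 * log t + (3 * log (Gamma t) - log (Gamma (3 * t))) + 2 * t := by
  have h1 := Gamma_pos_of_pos ht
  have h3 := Gamma_pos_of_pos (by positivity : 0 < 3 * t)
  rw [A_one_div, log_mul (by positivity) (exp_pos _).ne', log_exp, log_div (by positivity) h3.ne',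
    log_mul (by positivity) (by positivity), log_mul (by norm_num) (by positivity), log_pow,
    log_pow]
  push_cast
  ring

lemma tendsto_cubeRatioSum {t : ℝ} (ht : 0 < t) :
    Tendsto (fun n : ℕ ↦ cubeRatioSum t n + 2 * log n !) atTop
      (𝓝 (log (A (1 / t)) - 2 * t - log 12)) := by
  have hlim := (((BohrMollerup.tendsto_log_gamma ht).const_mul 3).sub
    (BohrMollerup.tendsto_log_gamma (by positivity : 0 < 3 * t))).add_const (2 * log t - log 3)
  have hlog12 : log 12 = log 4 + log 3 := by
    rw [← log_mul four_ne_zero three_ne_zero]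
    norm_num
  have hlimit : log (A (1 / t)) - 2 * t - log 12 =
      3 * log (Gamma t) - log (Gamma (3 * t)) + (2 * log t - log 3) := by
    rw [log_A_one_div ht, hlog12]
    ring
  rw [hlimit]
  refine hlim.congr fun n ↦ ?_
  rw [three_mul_logGammaSeq_sub_logGammaSeq ht]
  ring

noncomputable def thirdsBlock (m : ℕ) : ℝ → ℝ := logBlock (m + 1 / 3) (m + 2 / 3) (m + 1)

noncomputable def thirdsBlockSlope (m : ℕ) : ℝ :=
  logBlockDeriv (m + 1 / 3) (m + 2 / 3) (m + 1) (1 / 2)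

lemma sum_range_three_mul_div_three {M : Type*} [AddCommMonoid M] (g : ℝ → M) (N : ℕ) :
    ∑ j ∈ range (3 * N), g ((j + 1) / 3) =
      ∑ m ∈ range N, (g (m + 1 / 3) + g (m + 2 / 3) + g (m + 1)) := by
  induction N with
  | zero => simp
  | succ N ih =>
    rw [show 3 * (N + 1) = 3 * N + 1 + 1 + 1 by ring]
    simp only [sum_range_succ, ih]
    push_cast
    ring_nf
    abel

lemma cubeRatioSum_three_mul {t : ℝ} (ht : 0 < t) (N : ℕ) :
    cubeRatioSum t (3 * N) = 3 * N * log 3 + ∑ m ∈ range N, thirdsBlock m t -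
      3 * ∑ k ∈ Ico N (3 * N), log (t + (k + 1)) := by
  have hlog : ∀ j : ℕ, log (3 * t + (j + 1)) = log 3 + log (t + (j + 1) / 3) := fun j ↦ by
    rw [← log_mul three_ne_zero (by positivity)]
    ring_nf
  simp only [cubeRatioSum, sum_sub_distrib, hlog, sum_add_distrib, sum_const, card_range,
    nsmul_eq_mul, ← mul_sum]
  rw [sum_range_three_mul_div_three (fun x ↦ log (t + x)),
    ← sum_range_add_sum_Ico _ (by omega : N ≤ 3 * N)]
  simp only [thirdsBlock, logBlock, sum_add_distrib, sum_sub_distrib, ← mul_sum]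
  push_cast
  ring

-- Termwise, `3 (3m + r + 3/2)⁻¹ = (m + r/3 + 1/2)⁻¹`, so the sums telescope.
lemma sum_thirdsBlockSlope (N : ℕ) :
    ∑ m ∈ range N, thirdsBlockSlope m + 3 * ∑ k ∈ range N, (1 / 2 + (k + 1 : ℝ))⁻¹ + 2 =
      3 * ∑ k ∈ range (3 * N), (1 / 2 + (k + 1 : ℝ))⁻¹ + (N + 1 / 2 : ℝ)⁻¹ := by
  induction N with
  | zero => norm_num
  | succ N ih =>
    have hstep : thirdsBlockSlope N + 3 * (1 / 2 + (N + 1 : ℝ))⁻¹ - (N + 1 + 1 / 2 : ℝ)⁻¹ =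
        3 * ((1 / 2 + (3 * N + 1 : ℝ))⁻¹ + (1 / 2 + (3 * N + 1 + 1 : ℝ))⁻¹ +
          (1 / 2 + (3 * N + 2 + 1 : ℝ))⁻¹) - (N + 1 / 2 : ℝ)⁻¹ := by
      unfold thirdsBlockSlope logBlockDeriv
      field_simp
      ring
    rw [show 3 * (N + 1) = 3 * N + 1 + 1 + 1 by ring]
    simp only [sum_range_succ]
    push_cast
    linarith

lemma thirdsBlock_lt_tangent {t : ℝ} (ht : 0 < t) (hne : t ≠ 1 / 2) (m : ℕ) :
    thirdsBlock m t < thirdsBlock m (1 / 2) + thirdsBlockSlope m * (t - 1 / 2) := by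
  have hmem : ∀ u : ℝ, 0 < u → u ∈ Set.Ioi (max (-(m + 1 / 3 : ℝ)) (-(m + 2 / 3))) := fun u hu ↦ by
    simp only [Set.mem_Ioi, max_lt_iff]
    constructor <;> linarith [(Nat.cast_nonneg m : (0 : ℝ) ≤ m)]
  exact (strictConcaveOn_logBlock (by linarith) (by linarith)).lt_tangent_of_hasDerivAt
    (hmem _ one_half_pos) (hmem t ht) hne (hasDerivAt_logBlock (by positivity) (by positivity)
      (by positivity))

noncomputable def tangentGap (t : ℝ) : ℝ :=
  thirdsBlock 0 (1 / 2) + thirdsBlockSlope 0 * (t - 1 / 2) - thirdsBlock 0 t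

lemma sum_thirdsBlock_sub_le {t : ℝ} (ht : 0 < t) (hne : t ≠ 1 / 2) {N : ℕ} (hN : 0 < N) :
    ∑ m ∈ range N, (thirdsBlock m t - thirdsBlock m (1 / 2)) ≤
      (t - 1 / 2) * ∑ m ∈ range N, thirdsBlockSlope m - tangentGap t := by
  obtain ⟨K, rfl⟩ := Nat.exists_eq_add_of_lt hN
  have htail : ∑ m ∈ range K, (thirdsBlock (m + 1) t - thirdsBlock (m + 1) (1 / 2)) ≤
      ∑ m ∈ range K, (t - 1 / 2) * thirdsBlockSlope (m + 1) :=
    sum_le_sum fun m _ ↦ by linarith [thirdsBlock_lt_tangent ht hne (m + 1)]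
  rw [zero_add, sum_range_succ', sum_range_succ', mul_add, mul_sum, tangentGap]
  linarith

lemma sum_Ico_tangent_sub_log_le {t : ℝ} (ht : 0 < t) {N : ℕ} (hN : 0 < N) :
    ∑ k ∈ Ico N (3 * N),
        ((t - 1 / 2) * (1 / 2 + (k + 1 : ℝ))⁻¹ - (log (t + (k + 1)) - log (1 / 2 + (k + 1)))) ≤
      2 * (t - 1 / 2) ^ 2 / N := by
  have hNpos : (0 : ℝ) < N := by exact_mod_cast hN
  have hterm : ∀ k ∈ Ico N (3 * N),
      (t - 1 / 2) * (1 / 2 + (k + 1 : ℝ))⁻¹ - (log (t + (k + 1)) - log (1 / 2 + (k + 1))) ≤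
        (t - 1 / 2) ^ 2 / N ^ 2 := by
    intro k hk
    have hkN : (N : ℝ) ≤ k := by exact_mod_cast (mem_Ico.1 hk).1
    have hx : 0 < t + (k + 1) := by positivity
    have hy : 0 < 1 / 2 + (k + 1 : ℝ) := by positivity
    have hlog := sub_div_le_log_sub_log hx hy
    have hdiff : (t - 1 / 2) * (1 / 2 + (k + 1 : ℝ))⁻¹ - (t + (k + 1) - (1 / 2 + (k + 1))) /
        (t + (k + 1)) = (t - 1 / 2) ^ 2 / ((1 / 2 + (k + 1)) * (t + (k + 1))) := by
      field_simp
      ring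
    have hden : (t - 1 / 2) ^ 2 / ((1 / 2 + (k + 1)) * (t + (k + 1))) ≤ (t - 1 / 2) ^ 2 / N ^ 2 :=
      div_le_div_of_nonneg_left (sq_nonneg _) (by positivity) (by nlinarith)
    linarith
  calc _ ≤ (Ico N (3 * N)).card • ((t - 1 / 2) ^ 2 / N ^ 2) := sum_le_card_nsmul _ _ _ hterm
    _ = 2 * (t - 1 / 2) ^ 2 / N := by
      rw [Nat.card_Ico, nsmul_eq_mul, show 3 * N - N = 2 * N by omega]
      push_cast
      field_simp

lemma cubeRatioSum_sub_le {t : ℝ} (ht : 0 < t) (hne : t ≠ 1 / 2) {N : ℕ} (hN : 0 < N) :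
    2 * (t - 1 / 2) + (cubeRatioSum t (3 * N) - cubeRatioSum (1 / 2) (3 * N)) ≤
      (t - 1 / 2) * (N + 1 / 2 : ℝ)⁻¹ + 6 * (t - 1 / 2) ^ 2 / N - tangentGap t := by
  have hblocks := sum_thirdsBlock_sub_le ht hne hN
  have htail := sum_Ico_tangent_sub_log_le ht hN
  have hslope := sum_thirdsBlockSlope N
  rw [← sum_range_add_sum_Ico _ (by omega : N ≤ 3 * N)] at hslope
  rw [sum_sub_distrib, ← mul_sum, sum_sub_distrib] at htail
  rw [sum_sub_distrib] at hblocks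
  rw [cubeRatioSum_three_mul ht, cubeRatioSum_three_mul one_half_pos]
  linear_combination hblocks + 3 * htail + (t - 1 / 2) * hslope

lemma log_A_one_div_sub_log_A_two_le {t : ℝ} (ht : 0 < t) (hne : t ≠ 1 / 2) :
    log (A (1 / t)) - log (A 2) ≤ -tangentGap t := by
  have hthree : Tendsto (fun N : ℕ ↦ 3 * N) atTop atTop :=
    tendsto_id.const_mul_atTop' three_pos
  have hlhs : Tendsto (fun N : ℕ ↦ 2 * (t - 1 / 2) +
      (cubeRatioSum t (3 * N) - cubeRatioSum (1 / 2) (3 * N))) atTop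
      (𝓝 (log (A (1 / t)) - log (A 2))) := by
    have := ((tendsto_cubeRatioSum ht).sub (tendsto_cubeRatioSum one_half_pos)).comp hthree
    rw [one_div_one_div] at this
    convert this.const_add (2 * (t - 1 / 2)) using 2
    · simp only [Function.comp_apply]
      ring
    · ring
  have hrhs : Tendsto (fun N : ℕ ↦ (t - 1 / 2) * (N + 1 / 2 : ℝ)⁻¹ + 6 * (t - 1 / 2) ^ 2 / N -
      tangentGap t) atTop (𝓝 (-tangentGap t)) := by
    have hinv : Tendsto (fun N : ℕ ↦ (N + 1 / 2 : ℝ)⁻¹) atTop (𝓝 0) :=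
      tendsto_inv_atTop_zero.comp (tendsto_atTop_add_const_right _ _ tendsto_natCast_atTop_atTop)
    simpa using ((hinv.const_mul (t - 1 / 2)).add
      (tendsto_const_div_atTop_nhds_zero_nat (6 * (t - 1 / 2) ^ 2))).sub_const (tangentGap t)
  exact le_of_tendsto_of_tendsto hlhs hrhs
    ((eventually_gt_atTop 0).mono fun N hN ↦ cubeRatioSum_sub_le ht hne hN)

lemma A_lt_A_two {θ : ℝ} (hθ : 0 < θ) (hne : θ ≠ 2) : A θ < A 2 := by
  have ht : 0 < 1 / θ := one_div_pos.2 hθ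
  have htne : 1 / θ ≠ 1 / 2 := fun h ↦ hne (by simpa using h)
  have hgap : 0 < tangentGap (1 / θ) := by
    have := thirdsBlock_lt_tangent ht htne 0
    rw [tangentGap]
    linarith
  have hlog := log_A_one_div_sub_log_A_two_le ht htne
  rw [one_div_one_div] at hlog
  exact (log_lt_log_iff (A_pos hθ) (A_pos two_pos)).1 (by linarith)

lemma A_two : A 2 = 2 * π * exp 1 := by
  have hGamma_three_halves : Gamma (3 / 2) = √π / 2 := by
    rw [show (3 / 2 : ℝ) = 1 / 2 + 1 by norm_num, Gamma_add_one (by norm_num), Gamma_one_half_eq]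
    ring
  have hsq := sq_sqrt pi_pos.le
  rw [A, hGamma_three_halves, Gamma_one_half_eq, div_self two_ne_zero]
  field_simp
  linear_combination 4 * hsq

/-- `A` attains its maximum on `(0,∞)` at `θ = 2`, with `A(2) = 2πe`. -/
theorem A_max_at_two :
    A 2 = 2 * Real.pi * Real.exp 1 ∧
    ∀ θ : ℝ, 0 < θ → A θ ≤ A 2 ∧ (A θ = A 2 ↔ θ = 2) := by
  refine ⟨A_two, fun θ hθ ↦ ?_⟩
  rcases eq_or_ne θ 2 with rfl | hne
  · simp
  · have hlt := A_lt_A_two hθ hne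
    exact ⟨hlt.le, iff_of_false hlt.ne hne⟩
end

section
/- As θ → 0⁺, 1/A(θ) → ∞, i.e., A(θ) → 0 as θ → 0⁺. -/
/-!
Substituting `x = 1/θ`, `A(θ) = 4 x² Γ(x)³ / Γ(3x) · e^{2x}`. Two Beta integrals give
`Γ(x)³ / Γ(3x) = B(x, x) B(x, 2x)`, and since `t(1-t) ≤ 1/4` on `[0, 1]` each factor is at most
`4^{1-x}`. Hence `A(θ) ≤ 64 x² e^{-(log 16 - 2) x}`, which tends to `0` because `e² < 16`.
-/

open Real Filter Topology Set

lemma rpow_mul_one_sub_rpow_le {t p q : ℝ} (ht₀ : 0 ≤ t) (ht₁ : t ≤ 1) (hp : 0 ≤ p)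
    (hpq : p ≤ q) : t ^ p * (1 - t) ^ q ≤ (1 / 4) ^ p := by
  have h1t : 0 ≤ 1 - t := sub_nonneg.2 ht₁
  calc t ^ p * (1 - t) ^ q ≤ t ^ p * (1 - t) ^ p :=
        mul_le_mul_of_nonneg_left (rpow_le_rpow_of_exponent_ge' h1t (by linarith) hp hpq)
          (rpow_nonneg ht₀ p)
    _ = (t * (1 - t)) ^ p := (mul_rpow ht₀ h1t).symm
    _ ≤ (1 / 4) ^ p :=
        rpow_le_rpow (mul_nonneg ht₀ h1t) (by nlinarith [sq_nonneg (t - 1 / 2)]) hp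

namespace ProbabilityTheory

lemma beta_eq_integral {a b : ℝ} (ha : 0 < a) (hb : 0 < b) :
    beta a b = ∫ t in (0 : ℝ)..1, t ^ (a - 1) * (1 - t) ^ (b - 1) := by
  rw [beta_eq_betaIntegralReal a b ha hb, Complex.betaIntegral, ← Complex.reCLM_apply,
    ← ContinuousLinearMap.intervalIntegral_comp_comm _
      (Complex.betaIntegral_convergent (by simpa) (by simpa))]
  refine intervalIntegral.integral_congr fun t ht => ?_
  rw [uIcc_of_le zero_le_one] at ht
  have h1t : 0 ≤ 1 - t := sub_nonneg.2 ht.2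
  have hcast : (t : ℂ) ^ ((a : ℂ) - 1) * (1 - (t : ℂ)) ^ ((b : ℂ) - 1)
      = ((t ^ (a - 1) * (1 - t) ^ (b - 1) : ℝ) : ℂ) := by
    rw [Complex.ofReal_mul, Complex.ofReal_cpow ht.1, Complex.ofReal_cpow h1t]
    push_cast
    rfl
  rw [Complex.reCLM_apply, hcast, Complex.ofReal_re]

lemma beta_le_quarter_rpow {a b : ℝ} (ha : 1 ≤ a) (hab : a ≤ b) :
    beta a b ≤ (1 / 4) ^ (a - 1) := by
  rw [beta_eq_integral (by linarith) (by linarith)]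
  refine (le_abs_self _).trans ?_
  have hbound := intervalIntegral.norm_integral_le_of_norm_le_const (a := 0) (b := 1)
    (f := fun t => t ^ (a - 1) * (1 - t) ^ (b - 1)) (C := (1 / 4) ^ (a - 1)) fun t ht => by
      rw [uIoc_of_le zero_le_one] at ht
      rw [norm_of_nonneg (mul_nonneg (rpow_nonneg ht.1.le _) (rpow_nonneg (sub_nonneg.2 ht.2) _))]
      exact rpow_mul_one_sub_rpow_le ht.1.le ht.2 (by linarith) (by linarith)
  simpa only [Real.norm_eq_abs, sub_zero, abs_one, mul_one] using hbound

end ProbabilityTheory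

open ProbabilityTheory in
lemma Gamma_pow_three_div_Gamma_three_mul_le {x : ℝ} (hx : 1 ≤ x) :
    Gamma x ^ 3 / Gamma (3 * x) ≤ (1 / 16) ^ (x - 1) := by
  have hx₀ : 0 < x := by linarith
  have hsplit : Gamma x ^ 3 / Gamma (3 * x) = beta x x * beta x (2 * x) := by
    have h2 := (Gamma_pos_of_pos (by linarith : 0 < 2 * x)).ne'
    have h3 := (Gamma_pos_of_pos (by linarith : 0 < 3 * x)).ne'
    rw [beta, beta, show x + x = 2 * x by ring, show x + 2 * x = 3 * x by ring]
    field_simp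
  calc Gamma x ^ 3 / Gamma (3 * x) = beta x x * beta x (2 * x) := hsplit
    _ ≤ (1 / 4) ^ (x - 1) * (1 / 4) ^ (x - 1) :=
        mul_le_mul (beta_le_quarter_rpow hx le_rfl) (beta_le_quarter_rpow hx (by linarith))
          (beta_pos hx₀ (by linarith)).le (rpow_nonneg (by norm_num) _)
    _ = (1 / 16) ^ (x - 1) := by rw [← mul_rpow (by norm_num) (by norm_num)]; norm_num

lemma two_lt_log_sixteen : 2 < log 16 := by
  rw [show (16 : ℝ) = 2 ^ 4 by norm_num, log_pow]
  norm_num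
  linarith [log_two_gt_d9]

lemma one_div_sixteen_rpow_mul_exp (x : ℝ) :
    (1 / 16 : ℝ) ^ (x - 1) * exp (2 * x) = 16 * exp (-(log 16 - 2) * x) := by
  rw [rpow_def_of_pos (by norm_num), one_div, log_inv, ← exp_add,
    show -log 16 * (x - 1) + 2 * x = log 16 + -(log 16 - 2) * x by ring,
    exp_add, exp_log (by norm_num)]

lemma tendsto_Gamma_pow_three_div_Gamma_three_mul_mul_exp_atTop :
    Tendsto (fun x => 4 * x ^ 2 * Gamma x ^ 3 / Gamma (3 * x) * exp (2 * x)) atTop (𝓝 0) := by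
  have hmajorant : Tendsto (fun x : ℝ => 64 * (x ^ (2 : ℝ) * exp (-(log 16 - 2) * x)))
      atTop (𝓝 0) := by
    simpa using (tendsto_rpow_mul_exp_neg_mul_atTop_nhds_zero 2 _
      (sub_pos.2 two_lt_log_sixteen)).const_mul 64
  refine squeeze_zero' ?_ ?_ hmajorant
  · filter_upwards [eventually_gt_atTop 0] with x hx
    have := Gamma_pos_of_pos hx
    have := Gamma_pos_of_pos (by linarith : 0 < 3 * x)
    positivity
  · filter_upwards [eventually_ge_atTop 1] with x hx
    calc 4 * x ^ 2 * Gamma x ^ 3 / Gamma (3 * x) * exp (2 * x)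
        = 4 * x ^ 2 * (Gamma x ^ 3 / Gamma (3 * x)) * exp (2 * x) := by ring
      _ ≤ 4 * x ^ 2 * (1 / 16) ^ (x - 1) * exp (2 * x) := by
          gcongr
          exact Gamma_pow_three_div_Gamma_three_mul_le hx
      _ = 64 * (x ^ (2 : ℝ) * exp (-(log 16 - 2) * x)) := by
          rw [mul_assoc, one_div_sixteen_rpow_mul_exp, rpow_two]
          ring

/-- `A(θ) → 0` as `θ → 0⁺`, i.e. `1/A(θ) → ∞`. -/
theorem A_tendsto_zero : Filter.Tendsto A (nhdsWithin 0 (Set.Ioi 0)) (nhds 0) := by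
  have hA : A = (fun x => 4 * x ^ 2 * Gamma x ^ 3 / Gamma (3 * x) * exp (2 * x)) ∘ (·⁻¹) := by
    funext θ
    simp only [A, Function.comp_apply, div_eq_mul_inv, one_mul, inv_pow]
  rw [hA]
  exact tendsto_Gamma_pow_three_div_Gamma_three_mul_mul_exp_atTop.comp tendsto_inv_nhdsGT_zero
end

section
/- For every a > 0, 3 φ'(3a) > φ'(a), where φ'(x) = Σ_{n=1}^∞ 1/(n+x)^2. Equivalently, the trigamma-type function satisfies 3 Σ_{n≥1} 1/(n+3a)^2 > Σ_{n≥1} 1/(n+a)^2. -/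
/-!
Group the terms of `3 Σ_m 1/(m + 1 + 3a)²` by the residue of `m` modulo 3: the `n`-th group is
`3 Σ_{i<3} 1/(3(n + a) + i + 1)²`. Each of its three terms is at least
`1/(3(n + a) + 3)² = 1/(9 (n + 1 + a)²)`, strictly so for `i = 0`, so the group exceeds
`1/(n + 1 + a)²`, the `n`-th term of the left-hand side.
-/

theorem HasSum.sum_fin_mul_add {M : Type*} [AddCommMonoid M] [TopologicalSpace M]
    [ContinuousAdd M] [RegularSpace M] {f : ℕ → M} {s : M} (k : ℕ) [NeZero k]
    (hf : HasSum f s) : HasSum (fun n ↦ ∑ i : Fin k, f (n * k + i)) s :=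
  ((Nat.divModEquiv k).symm.hasSum_iff.mpr hf).prod_fiberwise fun _ ↦ hasSum_fintype _

theorem summable_one_div_nat_add_sq (c : ℝ) : Summable fun n : ℕ ↦ 1 / ((n : ℝ) + c) ^ 2 := by
  have := (Real.summable_one_div_nat_add_rpow c 2).mpr one_lt_two
  simp only [Real.rpow_two, sq_abs] at this
  exact this

theorem one_div_add_one_sq_lt_three_mul_sum {x : ℝ} (hx : 0 < 3 * x + 1) :
    1 / (x + 1) ^ 2 < 3 * ∑ i : Fin 3, 1 / (3 * x + i + 1) ^ 2 := by
  have h_le (i : Fin 3) : 1 / (3 * x + 3) ^ 2 ≤ 1 / (3 * x + i + 1) ^ 2 := by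
    have : (i : ℝ) ≤ 2 := by exact_mod_cast Nat.le_of_lt_succ i.isLt
    have : (0 : ℝ) ≤ i := Nat.cast_nonneg _
    exact one_div_le_one_div_of_le (pow_pos (by linarith) 2)
      (pow_le_pow_left₀ (by linarith) (by linarith) 2)
  have h_lt : 1 / (3 * x + 3) ^ 2 < 1 / (3 * x + (0 : Fin 3) + 1) ^ 2 := by
    rw [Fin.val_zero, Nat.cast_zero, add_zero]
    exact one_div_lt_one_div_of_lt (pow_pos hx 2)
      (pow_lt_pow_left₀ (by linarith) hx.le two_ne_zero)
  calc 1 / (x + 1) ^ 2 = 3 * ∑ _i : Fin 3, 1 / (3 * x + 3) ^ 2 := by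
        have : x + 1 ≠ 0 := by linarith
        simp only [Finset.sum_const, Finset.card_univ, Fintype.card_fin, nsmul_eq_mul]
        field_simp
        ring
    _ < 3 * ∑ i : Fin 3, 1 / (3 * x + i + 1) ^ 2 :=
        mul_lt_mul_of_pos_left
          (Finset.sum_lt_sum (fun i _ ↦ h_le i) ⟨0, Finset.mem_univ _, h_lt⟩) three_pos

/-- For every `a > 0`, `3 Σ_{n≥1} 1/(n+3a)² > Σ_{n≥1} 1/(n+a)²`. -/
theorem trigamma_type_inequality (a : ℝ) (ha : 0 < a) :
    (∑' n : ℕ, (1 : ℝ) / ((n + 1 : ℝ) + a) ^ 2) <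
      3 * ∑' n : ℕ, (1 : ℝ) / ((n + 1 : ℝ) + 3 * a) ^ 2 := by
  have h_summable (c : ℝ) : Summable fun n : ℕ ↦ 1 / ((n + 1 : ℝ) + c) ^ 2 := by
    simpa only [add_assoc] using summable_one_div_nat_add_sq (1 + c)
  have h_regroup := ((h_summable (3 * a)).hasSum.sum_fin_mul_add 3).mul_left 3
  have h_term (n : ℕ) : 1 / ((n + 1 : ℝ) + a) ^ 2 <
      3 * ∑ i : Fin 3, 1 / ((↑(n * 3 + i : ℕ) + 1 : ℝ) + 3 * a) ^ 2 := by
    convert one_div_add_one_sq_lt_three_mul_sum (x := n + a) (by positivity) using 1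
    · ring
    · congr! 3 with i
      push_cast
      ring
  calc ∑' n : ℕ, 1 / ((n + 1 : ℝ) + a) ^ 2
      < ∑' n : ℕ, 3 * ∑ i : Fin 3, 1 / ((↑(n * 3 + i : ℕ) + 1 : ℝ) + 3 * a) ^ 2 :=
        Summable.tsum_lt_tsum (fun n ↦ (h_term n).le) (h_term 0) (h_summable a)
          h_regroup.summable
    _ = 3 * ∑' n : ℕ, 1 / ((n + 1 : ℝ) + 3 * a) ^ 2 := h_regroup.tsum_eq
end

section
/- Let M(r) = (r-1) r^{1/(r-1)} / (e log r) for r > 1 (with M(1) = 1 by continuity). Then M is strictly increasing on (1,∞). -/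
/-- `M(r) = (r-1) r^{1/(r-1)} / (e log r)` for `r ≠ 1`, with `M(1) = 1`. -/
noncomputable def M (r : ℝ) : ℝ :=
  if r = 1 then 1 else (r - 1) * r ^ (1 / (r - 1)) / (Real.exp 1 * Real.log r)

/-!
With `s = log r / (r - 1)`, the slope of the secant of `log` between `1` and `r`, one has
`M r = exp (s - log s - 1)`. Strict concavity of `log` makes `s` strictly decreasing on `(1, ∞)`,
with values in `(0, 1)`, and `s ↦ s - log s` is strictly decreasing on `(0, 1]`.
-/

open Real Set

lemma strictAntiOn_log_div_sub_one : StrictAntiOn (fun r : ℝ ↦ log r / (r - 1)) (Ioi 1) := by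
  intro a ha b hb hab
  have key := strictConcaveOn_log_Ioi.secant_strict_mono (mem_Ioi.2 one_pos)
    (mem_Ioi.2 (one_pos.trans ha)) (mem_Ioi.2 (one_pos.trans hb)) ha.ne' hb.ne' hab
  simpa only [log_one, sub_zero] using key

lemma log_div_sub_one_mem_Ioo {r : ℝ} (hr : 1 < r) : log r / (r - 1) ∈ Ioo 0 1 := by
  have hr1 : 0 < r - 1 := sub_pos.2 hr
  refine ⟨div_pos (log_pos hr) hr1, (div_lt_one hr1).2 ?_⟩
  exact log_lt_sub_one_of_pos (one_pos.trans hr) hr.ne'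

lemma strictAntiOn_sub_log : StrictAntiOn (fun s : ℝ ↦ s - log s) (Ioc 0 1) := by
  intro s ⟨hs, _⟩ t ⟨ht, ht1⟩ hst
  -- `log (s / t) < s / t - 1 = (s - t) / t ≤ s - t`, the last step because `s < t ≤ 1`
  have hlog : log s - log t < s / t - 1 := by
    rw [← log_div hs.ne' ht.ne']
    exact log_lt_sub_one_of_pos (div_pos hs ht) (div_ne_one_of_ne hst.ne)
  have hle : s / t - 1 ≤ s - t := by
    rw [div_sub_one ht.ne', div_le_iff₀ ht]
    nlinarith
  show t - log t < s - log s
  linarith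

lemma M_eq_exp {r : ℝ} (hr : 1 < r) :
    M r = exp (log r / (r - 1) - log (log r / (r - 1)) - 1) := by
  have hr1 : 0 < r - 1 := sub_pos.2 hr
  have hlog : 0 < log r := log_pos hr
  rw [M, if_neg hr.ne', exp_sub, exp_sub, exp_log (div_pos hlog hr1),
    rpow_def_of_pos (one_pos.trans hr)]
  field_simp

/-- `M` is strictly increasing on `(1,∞)`. -/
theorem M_strictMono : StrictMonoOn M (Set.Ioi 1) := by
  intro a ha b hb hab
  rw [M_eq_exp ha, M_eq_exp hb, exp_lt_exp, sub_lt_sub_iff_right]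
  exact strictAntiOn_sub_log (Ioo_subset_Ioc_self (log_div_sub_one_mem_Ioo hb))
    (Ioo_subset_Ioc_self (log_div_sub_one_mem_Ioo ha)) (strictAntiOn_log_div_sub_one ha hb hab)
end

section
/- Reverse power-mean (Specht) inequality: let σ₁², …, σₙ² > 0 with max_{i,j} σᵢ²/σⱼ² = r, and let α₁,…,αₙ > 0 with Σ αᵢ = 1. Then Σᵢ αᵢ σᵢ² ≤ M(r) · Πᵢ (σᵢ²)^{αᵢ}, where M(r) = (r-1) r^{1/(r-1)}/(e log r) for r > 1 and M(1) = 1. -/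
/-!
Let `m = min σᵢ²`, so every `σᵢ²` lies in `[m, r m]`, and let `s = log r / (r - 1)` be the slope
of the chord of `log` over `[1, r]`. Concavity of `log` gives `log (z / m) ≥ s (z / m - 1)` on
`[m, r m]`; averaging, the geometric mean `G` satisfies `G ≥ m exp (s (A / m - 1))`, where `A` is
the arithmetic mean. Since `M(r) = exp (s - 1) / s`, this yields `M(r) G ≥ m exp (s A / m - 1) / s`,
which is at least `A` because `t ≤ exp (t - 1)`.
-/

open Real Finset

lemma M_eq_exp_div {r : ℝ} (hr : 1 < r) :
    M r = exp (log r / (r - 1) - 1) / (log r / (r - 1)) := by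
  have hr1 : r - 1 ≠ 0 := by linarith
  rw [M, if_neg hr.ne', rpow_def_of_pos (by linarith), exp_sub, mul_one_div]
  field_simp

lemma sub_one_mul_log_div_le_log {r y : ℝ} (hr : 1 < r) (hy₁ : 1 ≤ y) (hyr : y ≤ r) :
    (y - 1) * (log r / (r - 1)) ≤ log y := by
  have hr1 : 0 < r - 1 := by linarith
  have hchord := strictConcaveOn_log_Ioi.concaveOn.2 (Set.mem_Ioi.mpr one_pos)
    (Set.mem_Ioi.mpr (by linarith : (0 : ℝ) < r))
    (div_nonneg (by linarith) hr1.le : 0 ≤ (r - y) / (r - 1))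
    (div_nonneg (by linarith) hr1.le : 0 ≤ (y - 1) / (r - 1))
    (by field_simp; ring)
  have hy : (r - y) / (r - 1) * 1 + (y - 1) / (r - 1) * r = y := by field_simp; ring
  simp only [smul_eq_mul, log_one, mul_zero, zero_add, hy] at hchord
  calc (y - 1) * (log r / (r - 1)) = (y - 1) / (r - 1) * log r := by ring
    _ ≤ log y := hchord

lemma le_exp_mul_sub_one_div {s : ℝ} (hs : 0 < s) (x : ℝ) : x ≤ exp (s * x - 1) / s := by
  rw [le_div_iff₀ hs]
  linarith [add_one_le_exp (s * x - 1)]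

lemma prod_rpow_eq_exp_sum_mul_log {ι : Type*} (t : Finset ι) (w z : ι → ℝ)
    (hz : ∀ i ∈ t, 0 < z i) : ∏ i ∈ t, z i ^ w i = exp (∑ i ∈ t, w i * log (z i)) := by
  rw [exp_sum]
  exact prod_congr rfl fun i hi => by rw [rpow_def_of_pos (hz i hi), mul_comm]

section WeightedMeans

variable {ι : Type*} {t : Finset ι} {w z : ι → ℝ} {m r : ℝ}

lemma log_add_mul_le_sum_mul_log (hm : 0 < m) (hr : 1 < r) (hw : ∀ i ∈ t, 0 ≤ w i)
    (hw₁ : ∑ i ∈ t, w i = 1) (hz : ∀ i ∈ t, m ≤ z i ∧ z i ≤ r * m) :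
    log m + ((∑ i ∈ t, w i * z i) / m - 1) * (log r / (r - 1)) ≤ ∑ i ∈ t, w i * log (z i) := by
  set s := log r / (r - 1)
  have hterm : ∀ i ∈ t, w i * (log m + (z i / m - 1) * s) ≤ w i * log (z i) := by
    intro i hi
    have hzi : 0 < z i := hm.trans_le (hz i hi).1
    have hchord := sub_one_mul_log_div_le_log hr ((one_le_div hm).mpr (hz i hi).1)
      ((div_le_iff₀ hm).mpr (hz i hi).2)
    rw [log_div hzi.ne' hm.ne'] at hchord
    exact mul_le_mul_of_nonneg_left (by linarith) (hw i hi)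
  calc log m + ((∑ i ∈ t, w i * z i) / m - 1) * s
      = ∑ i ∈ t, (w i * (log m - s) + w i * z i * (s / m)) := by
        rw [sum_add_distrib, ← sum_mul, ← sum_mul, hw₁]
        field_simp
        ring
    _ = ∑ i ∈ t, w i * (log m + (z i / m - 1) * s) :=
        sum_congr rfl fun i _ => by field_simp; ring
    _ ≤ ∑ i ∈ t, w i * log (z i) := sum_le_sum hterm

theorem arith_mean_weighted_le_M_mul_geom_mean_weighted (hm : 0 < m) (hr : 1 ≤ r)
    (hw : ∀ i ∈ t, 0 ≤ w i) (hw₁ : ∑ i ∈ t, w i = 1) (hz : ∀ i ∈ t, m ≤ z i ∧ z i ≤ r * m) :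
    ∑ i ∈ t, w i * z i ≤ M r * ∏ i ∈ t, z i ^ w i := by
  rw [prod_rpow_eq_exp_sum_mul_log t w z fun i hi => hm.trans_le (hz i hi).1]
  rcases hr.eq_or_lt with rfl | hr
  · have hzm : ∀ i ∈ t, z i = m := fun i hi => le_antisymm (by linarith [(hz i hi).2]) (hz i hi).1
    have hA : ∑ i ∈ t, w i * z i = m := by
      rw [sum_congr rfl fun i hi => by rw [hzm i hi], ← sum_mul, hw₁, one_mul]
    have hG : ∑ i ∈ t, w i * log (z i) = log m := by
      rw [sum_congr rfl fun i hi => by rw [hzm i hi], ← sum_mul, hw₁, one_mul]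
    rw [hA, hG, exp_log hm, M, if_pos rfl, one_mul]
  set A := ∑ i ∈ t, w i * z i
  set s := log r / (r - 1)
  have hs : 0 < s := div_pos (log_pos hr) (by linarith)
  calc A = m * (A / m) := by field_simp
    _ ≤ m * (exp (s * (A / m) - 1) / s) :=
        mul_le_mul_of_nonneg_left (le_exp_mul_sub_one_div hs _) hm.le
    _ = exp (s - 1) / s * exp (log m + (A / m - 1) * s) := by
        have hexp : exp (s * (A / m) - 1) = exp (s - 1) * exp ((A / m - 1) * s) := by
          rw [← exp_add]
          ring_nf
        rw [exp_add, exp_log hm, hexp]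
        ring
    _ ≤ M r * exp (∑ i ∈ t, w i * log (z i)) := by
        rw [M_eq_exp_div hr]
        gcongr
        exact log_add_mul_le_sum_mul_log hm hr hw hw₁ hz

end WeightedMeans

theorem reverse_power_mean_general (n : ℕ) (hn : 0 < n) (σ2 α : Fin n → ℝ) (r : ℝ)
    (hσ : ∀ i, 0 < σ2 i) (hα : ∀ i, 0 < α i) (hsum : ∑ i, α i = 1)
    (hr : ∀ i j, σ2 i / σ2 j ≤ r) :
    ∑ i, α i * σ2 i ≤ M r * ∏ i, σ2 i ^ α i := by
  have : Nonempty (Fin n) := ⟨⟨0, hn⟩⟩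
  obtain ⟨i₀, hmin⟩ := Finite.exists_min σ2
  have hm := hσ i₀
  have hr₁ : 1 ≤ r := by simpa [div_self hm.ne'] using hr i₀ i₀
  exact arith_mean_weighted_le_M_mul_geom_mean_weighted hm hr₁ (fun i _ => (hα i).le) hsum
    fun i _ => ⟨hmin i, (div_le_iff₀ hm).mp (hr i i₀)⟩

/-- Reverse power-mean (Specht) inequality: if the ratios `σᵢ²/σⱼ²` are at most `r`,
with the maximum ratio equal to `r`, then the `α`-weighted arithmetic mean is at most
`M(r)` times the `α`-weighted geometric mean. -/
theorem reverse_power_mean (n : ℕ) (hn : 0 < n) (σ2 α : Fin n → ℝ) (r : ℝ)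
    (hσ : ∀ i, 0 < σ2 i) (hα : ∀ i, 0 < α i) (hsum : ∑ i, α i = 1)
    (hr : ∀ i j, σ2 i / σ2 j ≤ r) (hr' : ∃ i j, σ2 i / σ2 j = r) :
    ∑ i, α i * σ2 i ≤ M r * ∏ i, σ2 i ^ α i :=
  reverse_power_mean_general n hn σ2 α r hσ hα hsum hr
end
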